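/- arXiv:2305.11005 — 2 statements merged into one kernel-verified Lean document; each statement's English description precedes it below -/
import Mathlib

section
/- Let M̂1 and M̂2 be AMA menus indexed by {0,...,K}, let K1, K2 ⊆ {0,...,K}, and let φ : {0,...,K} → K1 × K2 be a bijection, with components φ1, φ2, such that for every k the k-th option of M̂1 equals its φ1(k)-th option and the k-th option of M̂2 equals its φ2(k)-th option. Assume that with F-probability 1: the boosted-welfare-maximizing options with minimal β of M̂1 and M̂2, as well as, for every buyer i, maximizers of the boosted welfare of v_{-i}, can be chosen in K1 and K2 respectively. Then for every λ ∈ [0,1], the convex combination M = λ M̂1 + (1−λ) M̂2 satisfies Rev(M) ≥ λ Rev(M̂1) + (1−λ) Rev(M̂2). -/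
/-! For a fixed option, boosted welfare is affine in the menu, so `W` of the combined menu is at
most the combination of the two `W`'s. On the good events the replication structure `φ` supplies a
single option index at which both menus play a welfare maximizer of minimal boost (resp. a
maximizer for `v₋ᵢ`); there the combined menu attains the combination of the maxima. Hence the
combined `W` is the combination of the `W`'s, each `W(v₋ᵢ)` is at least the combination, and the
minimal boost at most the combination, so the payment is pointwise superadditive almost surely.
Payments are bounded on valuation profiles, so integrating gives the revenue inequality. -/

open MeasureTheory Finset

namespace AMA

/-- An AMA menu: for each of the `K+1` option indices, an allocation
`x : Fin m → Fin n → ℝ` (buyer `i` receives `x i j` of item `j`) and a boost `β : ℝ`. -/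
abbrev Menu (m n K : ℕ) := Fin (K + 1) → (Fin m → Fin n → ℝ) × ℝ

/-- Inner product of a valuation and an allocation. -/
def dotp {n : ℕ} (v x : Fin n → ℝ) : ℝ := ∑ j, v j * x j

/-- A valid AMA menu: entries in `[0,1]`, each item allocated at most once in total,
default option `(0, 0)`. -/
def IsMenu {m n K : ℕ} (M : Menu m n K) : Prop :=
  (∀ k i j, 0 ≤ (M k).1 i j ∧ (M k).1 i j ≤ 1) ∧
  (∀ k j, ∑ i, (M k).1 i j ≤ 1) ∧ M 0 = 0

/-- The set of valuation profiles: each buyer's valuation lies in `[0,1]^n` with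
coordinate sum at most `1`. -/
def VP (m n : ℕ) : Set (Fin m → Fin n → ℝ) :=
  {v | ∀ i, (∀ j, 0 ≤ v i j ∧ v i j ≤ 1) ∧ ∑ j, v i j ≤ 1}

/-- Boosted welfare of option `k` at the valuation profile `v`. -/
def bw {m n K : ℕ} (M : Menu m n K) (v : Fin m → Fin n → ℝ) (k : Fin (K + 1)) : ℝ :=
  (∑ i, dotp (v i) ((M k).1 i)) + (M k).2

/-- Boosted welfare of option `k` at `v` when buyer `i` is omitted. -/
def bwWo {m n K : ℕ} (M : Menu m n K) (v : Fin m → Fin n → ℝ) (i : Fin m)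
    (k : Fin (K + 1)) : ℝ :=
  (∑ l ∈ Finset.univ.erase i, dotp (v l) ((M k).1 l)) + (M k).2

/-- Maximal boosted welfare `W(v)`. -/
noncomputable def W {m n K : ℕ} (M : Menu m n K) (v : Fin m → Fin n → ℝ) : ℝ :=
  Finset.univ.sup' Finset.univ_nonempty (bw M v)

/-- Maximal boosted welfare `W(v₋ᵢ)` with buyer `i` omitted. -/
noncomputable def WWo {m n K : ℕ} (M : Menu m n K) (v : Fin m → Fin n → ℝ)
    (i : Fin m) : ℝ :=
  Finset.univ.sup' Finset.univ_nonempty (bwWo M v i)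

/-- The minimal boost among boosted-welfare-maximizing options (tie-breaking in favor
of maximal total payment). -/
noncomputable def minBeta {m n K : ℕ} (M : Menu m n K) (v : Fin m → Fin n → ℝ) : ℝ :=
  sInf {b : ℝ | ∃ k, bw M v k = W M v ∧ b = (M k).2}

/-- Total payment collected at `v`:
`∑ i W(v₋ᵢ) − (m−1) W(v) − min {β k : W_k(v) = W(v)}`. -/
noncomputable def pay {m n K : ℕ} (M : Menu m n K) (v : Fin m → Fin n → ℝ) : ℝ :=
  (∑ i, WWo M v i) - ((m : ℝ) - 1) * W M v - minBeta M v

/-- Expected revenue of the AMA menu `M` under the profile distribution `F`. -/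
noncomputable def Rev {m n K : ℕ} (F : Measure (Fin m → Fin n → ℝ))
    (M : Menu m n K) : ℝ :=
  ∫ v, pay M v ∂F

/-- Option-wise convex combination of two AMA menus. -/
noncomputable def comb {m n K : ℕ} (lam : ℝ) (M M' : Menu m n K) : Menu m n K :=
  fun k => (fun i j => lam * (M k).1 i j + (1 - lam) * (M' k).1 i j,
            lam * (M k).2 + (1 - lam) * (M' k).2)

/-- The event that the option subset `K'` suffices at `v`: some boosted-welfare
maximizer with minimal boost lies in `K'`, and for every buyer `i` some maximizer of the
boosted welfare of `v₋ᵢ` lies in `K'`. -/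
def GoodEvent {m n K : ℕ} (M : Menu m n K) (K' : Finset (Fin (K + 1)))
    (v : Fin m → Fin n → ℝ) : Prop :=
  (∃ k ∈ K', bw M v k = W M v ∧ (M k).2 = minBeta M v) ∧
  ∀ i : Fin m, ∃ k ∈ K', bwWo M v i k = WWo M v i

/-- `M` is `ε`-reducible: some subset `K'` of options containing the default option, of
cardinality at most `√(K+1)`, whose good event has probability at least `1 - ε/m`. -/
def Reducible {m n K : ℕ} (F : Measure (Fin m → Fin n → ℝ)) (M : Menu m n K)
    (ε : ℝ) : Prop :=
  ∃ K' : Finset (Fin (K + 1)), 0 ∈ K' ∧ (K'.card : ℝ) ≤ Real.sqrt (K + 1) ∧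
    (F {v | GoodEvent M K' v}).toReal ≥ 1 - ε / (m : ℝ)

/-- `M₁` and `M₂` are `ε`-mode-connected by a piecewise linear path with `pieces`
linear pieces, all whose menus are valid AMA menus and have revenue at least
`min (Rev M₁) (Rev M₂) - ε`. -/
def PLConnected {m n K : ℕ} (F : Measure (Fin m → Fin n → ℝ)) (M₁ M₂ : Menu m n K)
    (ε : ℝ) (pieces : ℕ) : Prop :=
  ∃ P : Fin (pieces + 1) → Menu m n K, P 0 = M₁ ∧ P (Fin.last pieces) = M₂ ∧
    (∀ i, IsMenu (P i)) ∧
    ∀ i : Fin pieces, ∀ lam ∈ Set.Icc (0 : ℝ) 1,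
      Rev F (comb lam (P i.castSucc) (P i.succ)) ≥ min (Rev F M₁) (Rev F M₂) - ε

section Welfare

variable {m n K : ℕ}

lemma dotp_comb (lam : ℝ) (v x y : Fin n → ℝ) :
    dotp v (fun j => lam * x j + (1 - lam) * y j) = lam * dotp v x + (1 - lam) * dotp v y := by
  simp only [dotp, Finset.mul_sum, ← Finset.sum_add_distrib]
  exact Finset.sum_congr rfl fun j _ => by ring

lemma bw_comb (lam : ℝ) (M M' : Menu m n K) (v : Fin m → Fin n → ℝ) (k : Fin (K + 1)) :
    bw (comb lam M M') v k = lam * bw M v k + (1 - lam) * bw M' v k := by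
  simp only [bw, comb, dotp_comb, Finset.sum_add_distrib, ← Finset.mul_sum]
  ring

lemma bwWo_comb (lam : ℝ) (M M' : Menu m n K) (v : Fin m → Fin n → ℝ) (i : Fin m)
    (k : Fin (K + 1)) :
    bwWo (comb lam M M') v i k = lam * bwWo M v i k + (1 - lam) * bwWo M' v i k := by
  simp only [bwWo, comb, dotp_comb, Finset.sum_add_distrib, ← Finset.mul_sum]
  ring

lemma bw_congr {M : Menu m n K} {k k' : Fin (K + 1)} (h : M k = M k')
    (v : Fin m → Fin n → ℝ) : bw M v k = bw M v k' := by
  simp only [bw, h]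

lemma bwWo_congr {M : Menu m n K} {k k' : Fin (K + 1)} (h : M k = M k')
    (v : Fin m → Fin n → ℝ) (i : Fin m) : bwWo M v i k = bwWo M v i k' := by
  simp only [bwWo, h]

lemma bw_le_W (M : Menu m n K) (v : Fin m → Fin n → ℝ) (k : Fin (K + 1)) :
    bw M v k ≤ W M v :=
  Finset.le_sup' _ (Finset.mem_univ k)

lemma bwWo_le_WWo (M : Menu m n K) (v : Fin m → Fin n → ℝ) (i : Fin m) (k : Fin (K + 1)) :
    bwWo M v i k ≤ WWo M v i :=
  Finset.le_sup' _ (Finset.mem_univ k)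

lemma finite_minBeta_set (M : Menu m n K) (v : Fin m → Fin n → ℝ) :
    {b : ℝ | ∃ k, bw M v k = W M v ∧ b = (M k).2}.Finite :=
  (Set.finite_range fun k => (M k).2).subset fun _ ⟨k, _, hb⟩ => ⟨k, hb.symm⟩

lemma minBeta_le {M : Menu m n K} {v : Fin m → Fin n → ℝ} {k : Fin (K + 1)}
    (h : bw M v k = W M v) : minBeta M v ≤ (M k).2 :=
  csInf_le (finite_minBeta_set M v).bddBelow ⟨k, h, rfl⟩

lemma exists_minBeta (M : Menu m n K) (v : Fin m → Fin n → ℝ) :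
    ∃ k, bw M v k = W M v ∧ (M k).2 = minBeta M v := by
  obtain ⟨k, -, hk⟩ := Finset.exists_mem_eq_sup' Finset.univ_nonempty (bw M v)
  obtain ⟨k', hk', hb⟩ :=
    Set.Nonempty.csInf_mem (s := {b : ℝ | ∃ k, bw M v k = W M v ∧ b = (M k).2})
      ⟨_, k, hk.symm, rfl⟩ (finite_minBeta_set M v)
  exact ⟨k', hk', hb.symm⟩

lemma W_comb_le {lam : ℝ} (hl0 : 0 ≤ lam) (hl1 : lam ≤ 1) (M M' : Menu m n K)
    (v : Fin m → Fin n → ℝ) :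
    W (comb lam M M') v ≤ lam * W M v + (1 - lam) * W M' v :=
  Finset.sup'_le _ _ fun k _ => (bw_comb lam M M' v k).trans_le <|
    add_le_add (mul_le_mul_of_nonneg_left (bw_le_W M v k) hl0)
      (mul_le_mul_of_nonneg_left (bw_le_W M' v k) (sub_nonneg.2 hl1))

lemma le_pay_comb {lam : ℝ} (hl0 : 0 ≤ lam) (hl1 : lam ≤ 1) {N₁ N₂ : Menu m n K}
    {K₁ K₂ : Finset (Fin (K + 1))}
    (hjoint : ∀ k₁ ∈ K₁, ∀ k₂ ∈ K₂, ∃ k, N₁ k = N₁ k₁ ∧ N₂ k = N₂ k₂)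
    {v : Fin m → Fin n → ℝ} (h₁ : GoodEvent N₁ K₁ v) (h₂ : GoodEvent N₂ K₂ v) :
    lam * pay N₁ v + (1 - lam) * pay N₂ v ≤ pay (comb lam N₁ N₂) v := by
  set M := comb lam N₁ N₂
  obtain ⟨k₁, hk₁, hW₁, hβ₁⟩ := h₁.1
  obtain ⟨k₂, hk₂, hW₂, hβ₂⟩ := h₂.1
  obtain ⟨k, e₁, e₂⟩ := hjoint k₁ hk₁ k₂ hk₂
  have hbw : bw M v k = lam * W N₁ v + (1 - lam) * W N₂ v := by
    rw [bw_comb, bw_congr e₁, bw_congr e₂, hW₁, hW₂]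
  have hW : W M v = lam * W N₁ v + (1 - lam) * W N₂ v :=
    (W_comb_le hl0 hl1 N₁ N₂ v).antisymm (hbw ▸ bw_le_W M v k)
  have hβ : minBeta M v ≤ lam * minBeta N₁ v + (1 - lam) * minBeta N₂ v := by
    refine (minBeta_le (hbw.trans hW.symm)).trans_eq ?_
    simp only [M, comb, e₁, e₂, hβ₁, hβ₂]
  have hWWo : ∀ i, lam * WWo N₁ v i + (1 - lam) * WWo N₂ v i ≤ WWo M v i := fun i => by
    obtain ⟨k₁', hk₁', hi₁⟩ := h₁.2 i
    obtain ⟨k₂', hk₂', hi₂⟩ := h₂.2 i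
    obtain ⟨k', e₁', e₂'⟩ := hjoint k₁' hk₁' k₂' hk₂'
    calc lam * WWo N₁ v i + (1 - lam) * WWo N₂ v i = bwWo M v i k' := by
          rw [bwWo_comb, bwWo_congr e₁', bwWo_congr e₂', hi₁, hi₂]
      _ ≤ WWo M v i := bwWo_le_WWo M v i k'
  have hsum := Finset.sum_le_sum fun i (_ : i ∈ Finset.univ) => hWWo i
  rw [Finset.sum_add_distrib, ← Finset.mul_sum, ← Finset.mul_sum] at hsum
  simp only [pay, hW]
  linear_combination hsum + hβ

end Welfare

section Integrability

variable {m n K : ℕ}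

lemma measurable_bw (M : Menu m n K) (k : Fin (K + 1)) : Measurable fun v => bw M v k := by
  unfold bw dotp
  fun_prop

lemma measurable_bwWo (M : Menu m n K) (i : Fin m) (k : Fin (K + 1)) :
    Measurable fun v => bwWo M v i k := by
  unfold bwWo dotp
  fun_prop

lemma measurable_W (M : Menu m n K) : Measurable (W M) := by
  have : W M = Finset.univ.sup' Finset.univ_nonempty fun k v => bw M v k := by
    ext v; rw [Finset.sup'_apply]; rfl
  exact this ▸ Finset.measurable_sup' _ fun k _ => measurable_bw M k

lemma measurable_WWo (M : Menu m n K) (i : Fin m) : Measurable fun v => WWo M v i := by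
  have : (fun v => WWo M v i) = Finset.univ.sup' Finset.univ_nonempty fun k v => bwWo M v i k := by
    ext v; rw [Finset.sup'_apply]; rfl
  exact this ▸ Finset.measurable_sup' _ fun k _ => measurable_bwWo M i k

/-- Non-maximizing options are given the largest boost, which never undercuts the minimum. -/
lemma minBeta_eq_inf' (M : Menu m n K) (v : Fin m → Fin n → ℝ) :
    minBeta M v = Finset.univ.inf' Finset.univ_nonempty fun k =>
      if bw M v k = W M v then (M k).2
      else Finset.univ.sup' Finset.univ_nonempty fun k' => (M k').2 := by
  obtain ⟨k₀, hk₀, hβ₀⟩ := exists_minBeta M v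
  refine le_antisymm (Finset.le_inf' _ _ fun k _ => ?_) ?_
  · split_ifs with hk
    · exact minBeta_le hk
    · exact hβ₀ ▸ Finset.le_sup' (fun k' => (M k').2) (Finset.mem_univ k₀)
  · exact (Finset.inf'_le _ (Finset.mem_univ k₀)).trans_eq (by rw [if_pos hk₀, hβ₀])

lemma measurable_minBeta (M : Menu m n K) : Measurable (minBeta M) := by
  have : minBeta M = Finset.univ.inf' Finset.univ_nonempty fun k v =>
      if bw M v k = W M v then (M k).2
      else Finset.univ.sup' Finset.univ_nonempty fun k' => (M k').2 := by
    ext v; rw [Finset.inf'_apply]; exact minBeta_eq_inf' M v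
  exact this ▸ Finset.inf'_induction _ _ (fun _ hf _ hg => hf.inf hg) fun k _ =>
    Measurable.ite (measurableSet_eq_fun (measurable_bw M k) (measurable_W M))
      measurable_const measurable_const

lemma measurable_pay (M : Menu m n K) : Measurable (pay M) := by
  unfold pay
  have := measurable_W M
  have := measurable_minBeta M
  have := measurable_WWo M
  fun_prop

lemma measurableSet_goodEvent (M : Menu m n K) (K' : Finset (Fin (K + 1))) :
    MeasurableSet {v | GoodEvent M K' v} := by
  have := measurable_W M
  have := measurable_minBeta M
  have := measurable_WWo M
  have := measurable_bw M
  have := measurable_bwWo M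
  unfold GoodEvent
  measurability

lemma measurableSet_VP : MeasurableSet (VP m n) := by
  unfold VP
  measurability

def entryAbsSum (M : Menu m n K) : ℝ :=
  ∑ k, ((∑ i, ∑ j, |(M k).1 i j|) + |(M k).2|)

lemma abs_dotp_le {v : Fin n → ℝ} (hv : ∀ j, |v j| ≤ 1) (x : Fin n → ℝ) :
    |dotp v x| ≤ ∑ j, |x j| :=
  (Finset.abs_sum_le_sum_abs _ _).trans <| Finset.sum_le_sum fun j _ => by
    rw [abs_mul]
    exact mul_le_of_le_one_left (abs_nonneg _) (hv j)

lemma abs_partial_bw_le (M : Menu m n K) {v : Fin m → Fin n → ℝ} (hv : v ∈ VP m n)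
    (s : Finset (Fin m)) (k : Fin (K + 1)) :
    |∑ l ∈ s, dotp (v l) ((M k).1 l) + (M k).2| ≤ entryAbsSum M := by
  have hv' : ∀ l j, |v l j| ≤ 1 := fun l j =>
    abs_le.2 ⟨by linarith [((hv l).1 j).1], ((hv l).1 j).2⟩
  calc |∑ l ∈ s, dotp (v l) ((M k).1 l) + (M k).2|
      ≤ ∑ l ∈ s, |dotp (v l) ((M k).1 l)| + |(M k).2| :=
        (abs_add_le _ _).trans (add_le_add_left (Finset.abs_sum_le_sum_abs _ _) _)
    _ ≤ ∑ l, ∑ j, |(M k).1 l j| + |(M k).2| := by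
        gcongr
        calc ∑ l ∈ s, |dotp (v l) ((M k).1 l)| ≤ ∑ l ∈ s, ∑ j, |(M k).1 l j| :=
              Finset.sum_le_sum fun l _ => abs_dotp_le (hv' l) _
          _ ≤ ∑ l, ∑ j, |(M k).1 l j| :=
              Finset.sum_le_sum_of_subset_of_nonneg (Finset.subset_univ s) fun _ _ _ => by
                positivity
    _ ≤ entryAbsSum M :=
        Finset.single_le_sum (f := fun k => (∑ i, ∑ j, |(M k).1 i j|) + |(M k).2|)
          (fun _ _ => by positivity) (Finset.mem_univ k)

lemma abs_sup'_le {ι : Type*} {s : Finset ι} (hs : s.Nonempty) {f : ι → ℝ} {C : ℝ}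
    (h : ∀ i ∈ s, |f i| ≤ C) : |s.sup' hs f| ≤ C := by
  obtain ⟨i, hi, he⟩ := Finset.exists_mem_eq_sup' hs f
  exact he ▸ h i hi

lemma abs_pay_le (M : Menu m n K) {v : Fin m → Fin n → ℝ} (hv : v ∈ VP m n) :
    |pay M v| ≤ (m + |(m : ℝ) - 1| + 1) * entryAbsSum M := by
  set C := entryAbsSum M
  have hW : |W M v| ≤ C := abs_sup'_le _ fun k _ => abs_partial_bw_le M hv _ k
  have hWWo : ∀ i, |WWo M v i| ≤ C := fun i => abs_sup'_le _ fun k _ => abs_partial_bw_le M hv _ k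
  have hβ : |minBeta M v| ≤ C := by
    obtain ⟨k, -, hk⟩ := exists_minBeta M v
    simpa [← hk] using abs_partial_bw_le M hv ∅ k
  have hsum : |∑ i, WWo M v i| ≤ m * C := by
    calc |∑ i, WWo M v i| ≤ ∑ i, |WWo M v i| := Finset.abs_sum_le_sum_abs _ _
      _ ≤ ∑ _i : Fin m, C := Finset.sum_le_sum fun i _ => hWWo i
      _ = m * C := by simp
  calc |pay M v| ≤ |∑ i, WWo M v i| + |(m : ℝ) - 1| * |W M v| + |minBeta M v| := by
        unfold pay
        rw [← abs_mul]
        exact (abs_sub _ _).trans (add_le_add_left (abs_sub _ _) _)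
    _ ≤ m * C + |(m : ℝ) - 1| * C + C := by gcongr
    _ = (m + |(m : ℝ) - 1| + 1) * C := by ring

lemma integrable_pay {F : Measure (Fin m → Fin n → ℝ)} [IsProbabilityMeasure F]
    (hFV : F (VP m n) = 1) (M : Menu m n K) : Integrable (pay M) F :=
  Integrable.of_bound (measurable_pay M).aestronglyMeasurable _ <| by
    filter_upwards [(mem_ae_iff_prob_eq_one measurableSet_VP).2 hFV] with v hv
    exact abs_pay_le M hv

end Integrability

theorem statement13_general {m n K : ℕ} (F : Measure (Fin m → Fin n → ℝ))
    [IsProbabilityMeasure F] (hFV : F (VP m n) = 1)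
    (N₁ N₂ : Menu m n K)
    (K₁ K₂ : Finset (Fin (K + 1)))
    (φ : Fin (K + 1) → Fin (K + 1) × Fin (K + 1))
    (hφsurj : ∀ p : Fin (K + 1) × Fin (K + 1), p.1 ∈ K₁ → p.2 ∈ K₂ → ∃ k, φ k = p)
    (hrep₁ : ∀ k, N₁ k = N₁ (φ k).1) (hrep₂ : ∀ k, N₂ k = N₂ (φ k).2)
    (hgood₁ : F {v | GoodEvent N₁ K₁ v} = 1)
    (hgood₂ : F {v | GoodEvent N₂ K₂ v} = 1) :
    ∀ lam ∈ Set.Icc (0 : ℝ) 1,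
      Rev F (comb lam N₁ N₂) ≥ lam * Rev F N₁ + (1 - lam) * Rev F N₂ := by
  rintro lam ⟨hl0, hl1⟩
  have hjoint : ∀ k₁ ∈ K₁, ∀ k₂ ∈ K₂, ∃ k, N₁ k = N₁ k₁ ∧ N₂ k = N₂ k₂ := fun k₁ h₁ k₂ h₂ => by
    obtain ⟨k, hk⟩ := hφsurj (k₁, k₂) h₁ h₂
    exact ⟨k, by rw [hrep₁ k, hk], by rw [hrep₂ k, hk]⟩
  have hpay : ∀ᵐ v ∂F, lam * pay N₁ v + (1 - lam) * pay N₂ v ≤ pay (comb lam N₁ N₂) v := by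
    filter_upwards [(mem_ae_iff_prob_eq_one (measurableSet_goodEvent N₁ K₁)).2 hgood₁,
      (mem_ae_iff_prob_eq_one (measurableSet_goodEvent N₂ K₂)).2 hgood₂] with v h₁ h₂
    exact le_pay_comb hl0 hl1 hjoint h₁ h₂
  have hI₁ := (integrable_pay hFV N₁).const_mul lam
  have hI₂ := (integrable_pay hFV N₂).const_mul (1 - lam)
  calc lam * Rev F N₁ + (1 - lam) * Rev F N₂
      = ∫ v, (lam * pay N₁ v + (1 - lam) * pay N₂ v) ∂F := by
        rw [integral_add hI₁ hI₂, integral_const_mul, integral_const_mul, Rev, Rev]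
    _ ≤ Rev F (comb lam N₁ N₂) := integral_mono_ae (hI₁.add hI₂) (integrable_pay hFV _) hpay

/-- Let `N₁`, `N₂` be AMA menus, `K₁, K₂ ⊆ {0,…,K}`, and
`φ : {0,…,K} → K₁ × K₂` a bijection with components `φ₁, φ₂` such that the `k`-th
option of `N₁` equals its `φ₁ k`-th option and the `k`-th option of `N₂` equals its
`φ₂ k`-th option.  If with probability `1` the good events for `(N₁, K₁)` and
`(N₂, K₂)` hold, then for every `lam ∈ [0,1]` the convex combination
`lam • N₁ + (1-lam) • N₂` has revenue at least `lam * Rev N₁ + (1-lam) * Rev N₂`. -/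
theorem statement13 {m n K : ℕ} (hm : 0 < m) (F : Measure (Fin m → Fin n → ℝ))
    [IsProbabilityMeasure F] (hFV : F (VP m n) = 1)
    (N₁ N₂ : Menu m n K) (hN₁ : IsMenu N₁) (hN₂ : IsMenu N₂)
    (K₁ K₂ : Finset (Fin (K + 1)))
    (φ : Fin (K + 1) → Fin (K + 1) × Fin (K + 1))
    (hφinj : Function.Injective φ)
    (hφmem : ∀ k, (φ k).1 ∈ K₁ ∧ (φ k).2 ∈ K₂)
    (hφsurj : ∀ p : Fin (K + 1) × Fin (K + 1), p.1 ∈ K₁ → p.2 ∈ K₂ → ∃ k, φ k = p)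
    (hrep₁ : ∀ k, N₁ k = N₁ (φ k).1) (hrep₂ : ∀ k, N₂ k = N₂ (φ k).2)
    (hgood₁ : F {v | GoodEvent N₁ K₁ v} = 1)
    (hgood₂ : F {v | GoodEvent N₂ K₂ v} = 1) :
    ∀ lam ∈ Set.Icc (0 : ℝ) 1,
      Rev F (comb lam N₁ N₂) ≥ lam * Rev F N₁ + (1 - lam) * Rev F N₂ :=
  statement13_general F hFV N₁ N₂ K₁ K₂ φ hφsurj hrep₁ hrep₂ hgood₁ hgood₂

end AMA
end

section
/- Let L ≥ 1 be an integer, let a_1 ≥ a_2 ≥ ... ≥ a_L be real numbers, and let Y > 0. Then 0 ≤ a_1 − ∑_{k=1}^{L} a_k · e^{Y a_k} / ( ∑_{k'=1}^{L} e^{Y a_{k'}} ) ≤ L/(e·Y), where e is Euler's number. -/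
open Finset Real

/-! Each gap term `(a₁ - a_k) e^{Y a_k}` equals `e^{Y a₁} · x e^{-Y x}` with `x = a₁ - a_k`,
and `x e^{-Y x} ≤ 1 / (e Y)` for every real `x` because `e t ≤ e^t`. Summing the `L` terms and
dividing by the partition function, which is at least its top term `e^{Y a₁}`, gives
`L / (e Y)`. -/

lemma sub_mul_exp_mul_le_exp_mul_div {Y : ℝ} (hY : 0 < Y) (m t : ℝ) :
    (m - t) * exp (Y * t) ≤ exp (Y * m) / (exp 1 * Y) := by
  rw [le_div_iff₀ (by positivity)]
  calc (m - t) * exp (Y * t) * (exp 1 * Y) = exp 1 * (Y * (m - t)) * exp (Y * t) := by ring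
    _ ≤ exp (Y * (m - t)) * exp (Y * t) := by gcongr; exact exp_one_mul_le_exp
    _ = exp (Y * m) := by rw [← exp_add]; ring_nf

lemma sub_weighted_mean_eq {ι : Type*} (s : Finset ι) (m : ℝ) (a w : ι → ℝ)
    (hw : ∑ i ∈ s, w i ≠ 0) :
    m - (∑ i ∈ s, a i * w i) / ∑ i ∈ s, w i = (∑ i ∈ s, (m - a i) * w i) / ∑ i ∈ s, w i := by
  rw [eq_div_iff hw, sub_mul, div_mul_cancel₀ _ hw, mul_sum, ← sum_sub_distrib]
  exact sum_congr rfl fun i _ => by ring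

section Softmax

variable {ι : Type*} [Fintype ι] (a : ι → ℝ) (Y : ℝ)

theorem sub_softmax_mean_nonneg {i₀ : ι} (hmax : ∀ i, a i ≤ a i₀) :
    0 ≤ a i₀ - (∑ i, a i * exp (Y * a i)) / ∑ i, exp (Y * a i) := by
  have hS : 0 < ∑ i, exp (Y * a i) := sum_pos (fun i _ => exp_pos _) ⟨i₀, mem_univ _⟩
  rw [sub_weighted_mean_eq _ _ _ _ hS.ne']
  exact div_nonneg (sum_nonneg fun i _ => mul_nonneg (sub_nonneg.2 (hmax i)) (exp_pos _).le)
    hS.le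

theorem sub_softmax_mean_le (hY : 0 < Y) (i₀ : ι) :
    a i₀ - (∑ i, a i * exp (Y * a i)) / ∑ i, exp (Y * a i) ≤
      Fintype.card ι / (exp 1 * Y) := by
  have hS : 0 < ∑ i, exp (Y * a i) := sum_pos (fun i _ => exp_pos _) ⟨i₀, mem_univ _⟩
  have htop : exp (Y * a i₀) ≤ ∑ i, exp (Y * a i) :=
    single_le_sum (f := fun i => exp (Y * a i)) (fun i _ => (exp_pos _).le) (mem_univ i₀)
  rw [sub_weighted_mean_eq _ _ _ _ hS.ne', div_le_iff₀ hS]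
  calc ∑ i, (a i₀ - a i) * exp (Y * a i)
      ≤ ∑ _i : ι, exp (Y * a i₀) / (exp 1 * Y) :=
        sum_le_sum fun i _ => sub_mul_exp_mul_le_exp_mul_div hY _ _
    _ = Fintype.card ι / (exp 1 * Y) * exp (Y * a i₀) := by
        rw [sum_const, card_univ, nsmul_eq_mul]; ring
    _ ≤ Fintype.card ι / (exp 1 * Y) * ∑ i, exp (Y * a i) := by gcongr

end Softmax

/-- For reals `a 0 ≥ a 1 ≥ … ≥ a (L-1)` (with `L ≥ 1`) and `Y > 0`,
the gap between the maximum `a 0` and the softmax average with inverse temperature `Y`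
lies in `[0, L / (e · Y)]`. -/
theorem statement18 (L : ℕ) (hL : 1 ≤ L) (a : Fin L → ℝ) (ha : Antitone a)
    (Y : ℝ) (hY : 0 < Y) :
    0 ≤ a ⟨0, hL⟩ - (∑ k, a k * Real.exp (Y * a k)) / (∑ k, Real.exp (Y * a k)) ∧
    a ⟨0, hL⟩ - (∑ k, a k * Real.exp (Y * a k)) / (∑ k, Real.exp (Y * a k)) ≤
      (L : ℝ) / (Real.exp 1 * Y) := by
  have hmax : ∀ k, a k ≤ a ⟨0, hL⟩ := fun k => ha (Nat.zero_le k.val)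
  refine ⟨sub_softmax_mean_nonneg a Y hmax, ?_⟩
  simpa using sub_softmax_mean_le a Y hY ⟨0, hL⟩
end
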